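/- If L is a stable triplet cover of a fully-resolved X-tree T with n := |X| ≥ 3, then L is a strong lasso for T, i.e., L is simultaneously an edge-weight lasso and a topological lasso for T. -/

import Mathlib

/-!
At an interior vertex `v` of `T` with representatives `a₁, a₂, a₃` of its three branches, the
three cords `aᵢaⱼ` belong to `L`, and the distance from `aᵢ` to `v` is the Gromov product
`(d(aᵢ, aⱼ) + d(aᵢ, aₖ) - d(aⱼ, aₖ)) / 2`, so it is read off from `L`. Stability of `f` says that
the representative of the branch at `z` containing a neighbour `u` also represents a branch at
`u`; hence both ends of the edge `uz` are measured from the same leaf, and the weight of `uz` is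
the difference of two such heights.

For a second tree `T'`, send every interior vertex `v` of `T` to the median in `T'` of its three
representatives. The same computation shows that this map carries each edge of `T` to a path of
the same length in `T'` and preserves betweenness, so it is injective. A fully-resolved tree has
the largest possible number `2n - 2` of vertices, so the map is a bijection; it maps edges to
edges, and a tree inside an acyclic graph on the same vertex set is all of it, so it is an
isomorphism. Taking `T' = T`, the median map is the identity and the edge-length statement gives
the edge-weight lasso.
-/

open SimpleGraph

/-- An `X`-tree: a finite tree whose leaf set is (the image of) `X`,
with no vertices of degree 2. -/
structure XTree (α : Type) (X : Set α) where
  V : Type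
  fintypeV : Fintype V
  tree : SimpleGraph V
  isTree : tree.IsTree
  ι : α → V
  ι_injOn : Set.InjOn ι X
  leaf_iff : ∀ v : V, (tree.neighborSet v).ncard = 1 ↔ v ∈ ι '' X
  no_deg_two : ∀ v : V, (tree.neighborSet v).ncard ≠ 2

namespace XTree

variable {α : Type} {X : Set α}

/-- A vertex is interior if it is not a leaf. -/
def IsInterior (T : XTree α X) (v : T.V) : Prop := v ∉ T.ι '' X

/-- Fully-resolved: every interior vertex has degree 3. -/
def IsFullyResolved (T : XTree α X) : Prop :=
  ∀ v : T.V, T.IsInterior v → (T.tree.neighborSet v).ncard = 3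

/-- The unique path between two vertices of the tree. -/
noncomputable def treePath (T : XTree α X) (u v : T.V) : T.tree.Walk u v :=
  (T.isTree.existsUnique_path u v).exists.choose

lemma treePath_isPath (T : XTree α X) (u v : T.V) : (T.treePath u v).IsPath :=
  (T.isTree.existsUnique_path u v).exists.choose_spec

/-- Weighted path distance between two vertices. -/
noncomputable def pathDist (T : XTree α X) (w : Sym2 T.V → ℝ) (u v : T.V) : ℝ :=
  ((T.treePath u v).edges.map w).sum

lemma treePath_symm (T : XTree α X) (u v : T.V) :
    T.treePath u v = (T.treePath v u).reverse :=
  (T.isTree.existsUnique_path u v).unique (T.treePath_isPath u v)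
    ((T.treePath_isPath v u).reverse)

lemma pathDist_symm (T : XTree α X) (w : Sym2 T.V → ℝ) (u v : T.V) :
    T.pathDist w u v = T.pathDist w v u := by
  unfold pathDist
  rw [treePath_symm, SimpleGraph.Walk.edges_reverse, List.map_reverse, List.sum_reverse]

/-- The induced distance on pairs of leaf labels. -/
noncomputable def cordDist (T : XTree α X) (w : Sym2 T.V → ℝ) : Sym2 α → ℝ :=
  Sym2.lift ⟨fun a b => T.pathDist w (T.ι a) (T.ι b),
    fun a b => T.pathDist_symm w (T.ι a) (T.ι b)⟩

/-- An edge-weighting assigns a nonnegative weight to every edge. -/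
def IsEdgeWeighting (T : XTree α X) (w : Sym2 T.V → ℝ) : Prop :=
  ∀ e ∈ T.tree.edgeSet, 0 ≤ w e

/-- A proper edge-weighting gives positive weight to every interior edge
(i.e. every edge not incident with a leaf). -/
def IsProperWeighting (T : XTree α X) (w : Sym2 T.V → ℝ) : Prop :=
  T.IsEdgeWeighting w ∧ ∀ e ∈ T.tree.edgeSet, (∀ v ∈ e, T.IsInterior v) → 0 < w e

/-- The set of cords (2-element subsets) of `X`. -/
def cords (X : Set α) : Set (Sym2 α) := {c | ¬ c.IsDiag ∧ ∀ a ∈ c, a ∈ X}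

/-- Two weighted trees are `L`-isometric if their leaf distances agree on `L`. -/
def LIsometric (T : XTree α X) (w : Sym2 T.V → ℝ) (T' : XTree α X) (w' : Sym2 T'.V → ℝ)
    (L : Set (Sym2 α)) : Prop :=
  ∀ c ∈ L, T.cordDist w c = T'.cordDist w' c

/-- `L` is an edge-weight lasso for `T`. -/
def IsEdgeWeightLasso (T : XTree α X) (L : Set (Sym2 α)) : Prop :=
  ∀ w w' : Sym2 T.V → ℝ, T.IsProperWeighting w → T.IsProperWeighting w' →
    LIsometric T w T w' L → ∀ e ∈ T.tree.edgeSet, w e = w' e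

/-- Two `X`-trees are equivalent if there is a graph isomorphism fixing `X`. -/
def Equivalent (T T' : XTree α X) : Prop :=
  ∃ φ : T.tree ≃g T'.tree, ∀ a ∈ X, φ (T.ι a) = T'.ι a

/-- `L` is a topological lasso for `T`. -/
def IsTopologicalLasso (T : XTree α X) (L : Set (Sym2 α)) : Prop :=
  ∀ (T' : XTree α X) (w : Sym2 T.V → ℝ) (w' : Sym2 T'.V → ℝ),
    T.IsProperWeighting w → T'.IsProperWeighting w' →
    LIsometric T w T' w' L → Equivalent T T'

/-- `L` is a strong lasso for `T`. -/
def IsStrongLasso (T : XTree α X) (L : Set (Sym2 α)) : Prop :=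
  IsEdgeWeightLasso T L ∧ IsTopologicalLasso T L

/-- The set of leaf labels on the side of edge `e` containing endpoint `u`. -/
def sideSet (T : XTree α X) (e : Sym2 T.V) (u : T.V) : Set α :=
  {a | a ∈ X ∧ (T.tree.deleteEdges {e}).Reachable (T.ι a) u}

/-- The clusters of `T`: leaf sets of the two components of `T - e`, over all edges `e`. -/
def clus (T : XTree α X) : Set (Set α) :=
  {A | ∃ e ∈ T.tree.edgeSet, ∃ u ∈ e, A = T.sideSet e u}

/-- A stable transversal for a collection of subsets of `α`. -/
def IsStableTransversal (C : Set (Set α)) (f : Set α → α) : Prop :=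
  (∀ A ∈ C, f A ∈ A) ∧ ∀ A ∈ C, ∀ B ∈ C, f A ∈ B → B ⊆ A → f A = f B

/-- Leaf labels of the component of `T - v` containing the vertex `u`. -/
def compSet (T : XTree α X) (v u : T.V) : Set α :=
  {a | a ∈ X ∧ ∃ p : T.tree.Walk (T.ι a) u, v ∉ p.support}

/-- The triplet cover `L_{(T,f)}` generated by a transversal `f`. -/
def tripletCoverOf (T : XTree α X) (f : Set α → α) : Set (Sym2 α) :=
  {c | ∃ v u₁ u₂ : T.V, T.IsInterior v ∧ T.tree.Adj v u₁ ∧ T.tree.Adj v u₂ ∧ u₁ ≠ u₂ ∧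
    c = s(f (T.compSet v u₁), f (T.compSet v u₂))}

/-- `L` is a stable triplet cover of `T`. -/
def IsStableTripletCover (T : XTree α X) (L : Set (Sym2 α)) : Prop :=
  ∃ f : Set α → α, IsStableTransversal (clus T) f ∧ L = tripletCoverOf T f

/-- `T|{a,b,c,d}` is the quartet tree `ab||cd`: the four leaves are distinct members
of `X` and the path from `a` to `b` is vertex-disjoint from the path from `c` to `d`. -/
def Quartet (T : XTree α X) (a b c d : α) : Prop :=
  a ∈ X ∧ b ∈ X ∧ c ∈ X ∧ d ∈ X ∧ List.Pairwise (· ≠ ·) [a, b, c, d] ∧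
  ∀ (p : T.tree.Walk (T.ι a) (T.ι b)) (q : T.tree.Walk (T.ι c) (T.ι d)),
    p.IsPath → q.IsPath → ∀ v, v ∈ p.support → v ∉ q.support

/-- The cord `c` admits pivots relative to already-available cords `L ∪ earlier`. -/
def HasPivots (T : XTree α X) (L : Set (Sym2 α)) (earlier : List (Sym2 α))
    (c : Sym2 α) : Prop :=
  ∃ a b p q : α, c = s(a, b) ∧ Quartet T a p q b ∧
    ∀ c' ∈ [s(a, p), s(a, q), s(b, p), s(b, q), s(p, q)], c' ∈ L ∨ c' ∈ earlier

/-- `ord` is a shellable ordering of `cords X - L` with respect to `T`. -/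
def IsShellableOrdering (T : XTree α X) (L : Set (Sym2 α)) (ord : List (Sym2 α)) : Prop :=
  ord.Nodup ∧ (∀ c, c ∈ ord ↔ c ∈ cords X \ L) ∧
  ∀ i (h : i < ord.length), HasPivots T L (ord.take i) (ord.get ⟨i, h⟩)

/-- `L` is a shellable lasso for `T`: `L ⊆ cords X`, every element of `X` occurs in some
cord of `L`, and `cords X - L` admits a shellable ordering. -/
def IsShellableLasso (T : XTree α X) (L : Set (Sym2 α)) : Prop :=
  L ⊆ cords X ∧ (∀ a ∈ X, ∃ c ∈ L, a ∈ c) ∧ ∃ ord, IsShellableOrdering T L ord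

/-- The graph `(Xs, L)` is a 2d-tree. -/
def Is2dTree (Xs : Set α) (L : Set (Sym2 α)) : Prop :=
  ∃ ord : List α, ord.Nodup ∧ (∀ a, a ∈ ord ↔ a ∈ Xs) ∧
    ∃ h2 : 2 ≤ ord.length,
      s(ord.get ⟨0, by omega⟩, ord.get ⟨1, by omega⟩) ∈ L ∧
      ∀ i (h : i < ord.length), 2 ≤ i →
        {b | b ∈ ord.take i ∧ s(ord.get ⟨i, h⟩, b) ∈ L}.ncard = 2

/-- Leaves `x` and `y` form a cherry of `T`. -/
def IsCherry (T : XTree α X) (x y : α) : Prop :=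
  x ≠ y ∧ x ∈ X ∧ y ∈ X ∧ ∃ v : T.V, T.tree.Adj (T.ι x) v ∧ T.tree.Adj (T.ι y) v

/-- `T'` is (equivalent to) the restriction `T|Y` of `T` to `Y ⊆ X`, characterized by the
fact that the clusters of `T|Y` are exactly the nonempty proper restrictions to `Y`
of clusters of `T`. -/
def IsRestrictionOf {Y : Set α} (T' : XTree α Y) (T : XTree α X) : Prop :=
  Y ⊆ X ∧ clus T' = {A | (∃ B ∈ clus T, A = B ∩ Y) ∧ A.Nonempty ∧ A ≠ Y}

open Classical in
/-- One application of the extension rule (R), acting on a state consisting of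
the current set of cords together with the current distance values. -/
def RStep (Xs : Set α) (S S' : Set (Sym2 α) × (Sym2 α → ℝ)) : Prop :=
  ∃ x y u z : α, x ∈ Xs ∧ y ∈ Xs ∧ u ∈ Xs ∧ z ∈ Xs ∧
    List.Pairwise (· ≠ ·) [x, y, u, z] ∧
    s(x, y) ∈ S.1 ∧ s(y, u) ∈ S.1 ∧ s(y, z) ∈ S.1 ∧ s(x, u) ∈ S.1 ∧ s(u, z) ∈ S.1 ∧
    s(x, z) ∉ S.1 ∧
    S.2 s(x, y) + S.2 s(u, z) < S.2 s(x, u) + S.2 s(y, z) ∧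
    S'.1 = insert s(x, z) S.1 ∧
    S'.2 = Function.update S.2 s(x, z) (S.2 s(x, u) + S.2 s(y, z) - S.2 s(y, u))

/-- `S` is the result `cl_R(L)` (with its `d`-values) of exhaustively applying rule (R)
starting from `L` with initial distance values `d`. -/
def IsRClosureOf (Xs : Set α) (L : Set (Sym2 α)) (d : Sym2 α → ℝ)
    (S : Set (Sym2 α) × (Sym2 α → ℝ)) : Prop :=
  Relation.ReflTransGen (RStep Xs) (L, d) S ∧ ∀ S', ¬ RStep Xs S S'

end XTree

namespace SimpleGraph

variable {V W : Type*} {G : SimpleGraph V} {H : SimpleGraph W}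

theorem IsTree.exists_iso_of_bijective (hG : G.IsTree) (hH : H.IsAcyclic) {φ : V → W}
    (hφ : φ.Bijective) (hadj : ∀ {u v}, G.Adj u v → H.Adj (φ u) (φ v)) :
    ∃ e : G ≃g H, ⇑e = φ := by
  set e := Equiv.ofBijective φ hφ
  have htree : (G.map e.toEmbedding).IsTree := (Iso.map e G).isTree_iff.mp hG
  have : Nonempty W := htree.nonempty
  have hmap : G.map e.toEmbedding = H := by
    refine (maximal_isAcyclic_iff_isTree.mpr htree).eq_of_le hH ?_
    rintro _ _ ⟨-, u, v, huv, rfl, rfl⟩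
    exact hadj huv
  subst hmap
  exact ⟨Iso.map e G, rfl⟩

theorem Walk.exists_walk_to_first_mem {a b : V} (p : G.Walk a b) {s : Set V} (hb : b ∈ s) :
    ∃ m ∈ s, ∃ q : G.Walk a m, q.support ⊆ p.support ∧ ∀ y ∈ q.support, y ∈ s → y = m := by
  classical
  induction p with
  | nil => exact ⟨_, hb, nil, by simp, by simp⟩
  | @cons a a' b h p ih =>
    by_cases ha : a ∈ s
    · exact ⟨a, ha, nil, by simp, by simp⟩
    · obtain ⟨m, hm, q, hqp, hq⟩ := ih hb
      refine ⟨m, hm, cons h q, by simpa using List.cons_subset_cons a hqp, ?_⟩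
      simp only [support_cons, List.mem_cons, forall_eq_or_imp]
      exact ⟨fun h => absurd h ha, hq⟩

end SimpleGraph

namespace XTree

open SimpleGraph Walk

variable {α : Type} {X : Set α} (T : XTree α X)

instance : Fintype T.V := T.fintypeV

@[simp] theorem not_isInterior {v : T.V} : ¬ T.IsInterior v ↔ v ∈ T.ι '' X := not_not

theorem treePath_eq_of_isPath {u v : T.V} {p : T.tree.Walk u v} (hp : p.IsPath) :
    p = T.treePath u v :=
  (T.isTree.existsUnique_path u v).unique hp (T.treePath_isPath u v)

theorem treePath_self (u : T.V) : T.treePath u u = nil :=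
  (T.treePath_eq_of_isPath IsPath.nil).symm

theorem treePath_of_adj {u v : T.V} (h : T.tree.Adj u v) : T.treePath u v = cons h nil :=
  (T.treePath_eq_of_isPath (by simp [h.ne])).symm

theorem support_treePath_subset {u v : T.V} (p : T.tree.Walk u v) :
    (T.treePath u v).support ⊆ p.support := by
  classical
  rw [← T.treePath_eq_of_isPath p.bypass_isPath]
  exact p.support_bypass_subset_support

@[simp] theorem pathDist_self (w : Sym2 T.V → ℝ) (u : T.V) : T.pathDist w u u = 0 := by
  simp [pathDist, treePath_self]

theorem pathDist_of_adj (w : Sym2 T.V → ℝ) {u v : T.V} (h : T.tree.Adj u v) :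
    T.pathDist w u v = w s(u, v) := by
  simp [pathDist, T.treePath_of_adj h]

theorem pathDist_nonneg {w : Sym2 T.V → ℝ} (hw : T.IsEdgeWeighting w) (u v : T.V) :
    0 ≤ T.pathDist w u v :=
  List.sum_nonneg fun _ hx => by
    obtain ⟨e, he, rfl⟩ := List.mem_map.mp hx
    exact hw e ((T.treePath u v).edges_subset_edgeSet he)

def Btw (u v x : T.V) : Prop := v ∈ (T.treePath u x).support

variable {T}

theorem IsProperWeighting.pos_of_adj {w : Sym2 T.V → ℝ} (hw : T.IsProperWeighting w)
    {u v : T.V} (h : T.tree.Adj u v) (hu : T.IsInterior u) (hv : T.IsInterior v) :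
    0 < w s(u, v) :=
  hw.2 _ h fun _ hx => (Sym2.mem_iff.mp hx).elim (· ▸ hu) (· ▸ hv)

theorem btw_left (u x : T.V) : T.Btw u u x := start_mem_support _

theorem btw_right (u x : T.V) : T.Btw u x x := end_mem_support _

theorem eq_of_btw_self {u v : T.V} (h : T.Btw u v u) : v = u := by
  simpa [Btw, treePath_self] using h

theorem eq_or_eq_of_btw_of_adj {u m v : T.V} (h : T.tree.Adj u v) (hm : T.Btw u m v) :
    m = u ∨ m = v := by
  simpa [Btw, T.treePath_of_adj h] using hm

theorem btw_of_treePath_eq_cons {u n v : T.V} {h : T.tree.Adj u n} {q : T.tree.Walk n v}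
    (hq : T.treePath u v = cons h q) : T.Btw u n v := by
  rw [Btw, hq]
  simp

theorem Btw.symm {u v x : T.V} (h : T.Btw u v x) : T.Btw x v u := by
  rwa [Btw, T.treePath_symm x u, support_reverse, List.mem_reverse]

theorem Btw.append_treePath {u v x : T.V} (h : T.Btw u v x) :
    (T.treePath u v).append (T.treePath v x) = T.treePath u x := by
  classical
  rw [← T.treePath_eq_of_isPath ((T.treePath_isPath u x).takeUntil h),
    ← T.treePath_eq_of_isPath ((T.treePath_isPath u x).dropUntil h)]
  exact take_spec _ h

theorem pathDist_eq_add_of_btw (w : Sym2 T.V → ℝ) {u v x : T.V} (h : T.Btw u v x) :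
    T.pathDist w u x = T.pathDist w u v + T.pathDist w v x := by
  rw [pathDist, pathDist, pathDist, ← h.append_treePath, edges_append, List.map_append,
    List.sum_append]

theorem Btw.btw_of_btw_left {u v x y : T.V} (h : T.Btw u v x) (hy : T.Btw u y v) :
    T.Btw u y x := by
  rw [Btw, ← h.append_treePath, mem_support_append_iff]
  exact Or.inl hy

theorem Btw.btw_of_btw_right {u v x y : T.V} (h : T.Btw u v x) (hy : T.Btw v y x) :
    T.Btw u y x := by
  rw [Btw, ← h.append_treePath, mem_support_append_iff]
  exact Or.inr hy

theorem Btw.eq_of_btw_of_btw {u v x y : T.V} (h : T.Btw u v x) (hy₁ : T.Btw u y v)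
    (hy₂ : T.Btw v y x) : y = v := by
  by_contra hne
  have hp : ((T.treePath u v).append (T.treePath v x)).IsPath :=
    h.append_treePath ▸ T.treePath_isPath u x
  exact hp.ne_of_mem_support_of_append hne hy₁ hy₂ rfl

theorem btw_of_forall_btw {u v x : T.V} (h : ∀ y, T.Btw u y v → T.Btw v y x → y = v) :
    T.Btw u v x := by
  have hp : ((T.treePath u v).append (T.treePath v x)).IsPath := by
    have hvx := (T.treePath_isPath v x).support_nodup
    rw [← cons_tail_support, List.nodup_cons] at hvx
    rw [isPath_def, support_append, List.nodup_append]
    refine ⟨(T.treePath_isPath u v).support_nodup, hvx.2, fun y hy₁ y' hy₂ hyy => ?_⟩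
    subst hyy
    obtain rfl := h y hy₁ (List.mem_of_mem_tail hy₂)
    exact hvx.1 hy₂
  rw [Btw, ← T.treePath_eq_of_isPath hp, mem_support_append_iff]
  exact Or.inl (end_mem_support _)

theorem btw_antisymm {a b c : T.V} (h₁ : T.Btw a b c) (h₂ : T.Btw a c b) : b = c :=
  (h₁.eq_of_btw_of_btw h₂ (btw_right b c)).symm

theorem Btw.btw_or_btw {a b c d : T.V} (hb : T.Btw a b d) (hc : T.Btw a c d) :
    T.Btw a b c ∨ T.Btw a c b := by
  rw [Btw, ← hc.append_treePath, mem_support_append_iff] at hb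
  exact hb.imp id fun (hcbd : T.Btw c b d) => btw_of_forall_btw fun y hy₁ hy₂ =>
    hc.eq_of_btw_of_btw hy₁ (hcbd.btw_of_btw_left hy₂)

theorem Btw.trans {a b c d : T.V} (h₁ : T.Btw a b c) (h₂ : T.Btw b c d) (hbc : b ≠ c) :
    T.Btw a c d := by
  have := T.support_treePath_subset ((T.treePath a b).reverse.append (T.treePath a d)) h₂
  rw [mem_support_append_iff, support_reverse, List.mem_reverse] at this
  exact this.resolve_left fun h => hbc (btw_antisymm h₁ h)

theorem btw_of_btw_of_btw {a m c p q : T.V} (hm : T.Btw a m c) (hp : T.Btw a p m)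
    (hq : T.Btw c q m) : T.Btw p m q :=
  btw_of_forall_btw fun _ hy₁ hy₂ =>
    hm.eq_of_btw_of_btw (hp.btw_of_btw_right hy₁) (hq.btw_of_btw_right hy₂.symm).symm

theorem exists_median (a b c : T.V) : ∃ m, T.Btw a m b ∧ T.Btw a m c ∧ T.Btw b m c := by
  obtain ⟨m, hm, q, hqp, hq⟩ :=
    (T.treePath a b).exists_walk_to_first_mem (s := {y | T.Btw c y b}) (btw_right c b)
  refine ⟨m, hqp (end_mem_support q), btw_of_forall_btw fun y hy₁ hy₂ => ?_, hm.symm⟩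
  exact hq y (T.support_treePath_subset q hy₁) (hm.btw_of_btw_left hy₂.symm)

theorem adj_of_forall_btw {u v : T.V} (hne : u ≠ v) (h : ∀ y, T.Btw u y v → y = u ∨ y = v) :
    T.tree.Adj u v := by
  obtain ⟨n, hn, q, hq⟩ := exists_eq_cons_of_ne hne (T.treePath u v)
  rcases h n (btw_of_treePath_eq_cons hq) with rfl | rfl
  · exact absurd rfl hn.ne
  · exact hn

variable (T)

theorem isInterior_of_adj_of_adj {z u u' : T.V} (h : T.tree.Adj z u) (h' : T.tree.Adj z u')
    (hne : u ≠ u') : T.IsInterior z := by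
  intro hz
  obtain ⟨b, hb⟩ := Set.ncard_eq_one.mp ((T.leaf_iff z).mpr hz)
  have hu : u ∈ T.tree.neighborSet z := h
  have hu' : u' ∈ T.tree.neighborSet z := h'
  rw [hb] at hu hu'
  exact hne (hu.trans hu'.symm)

theorem eq_of_adj_leaf {a : α} (ha : a ∈ X) {y y' : T.V} (hy : T.tree.Adj (T.ι a) y)
    (hy' : T.tree.Adj (T.ι a) y') : y = y' := by
  by_contra hne
  exact T.isInterior_of_adj_of_adj hy hy' hne ⟨a, ha, rfl⟩

variable {T}

theorem Btw.isInterior {u z v : T.V} (h : T.Btw u z v) (hu : z ≠ u) (hv : z ≠ v) :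
    T.IsInterior z := by
  obtain ⟨n₁, h₁, q₁, hq₁⟩ := exists_eq_cons_of_ne hu (T.treePath z u)
  obtain ⟨n₂, h₂, q₂, hq₂⟩ := exists_eq_cons_of_ne hv (T.treePath z v)
  refine T.isInterior_of_adj_of_adj h₁ h₂ fun hn => h₁.ne ?_
  subst hn
  exact (h.eq_of_btw_of_btw (btw_of_treePath_eq_cons hq₁).symm (btw_of_treePath_eq_cons hq₂)).symm

theorem leaf_eq_or_eq_of_btw {a : α} (ha : a ∈ X) {u v : T.V} (h : T.Btw u (T.ι a) v) :
    T.ι a = u ∨ T.ι a = v := by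
  by_contra! hne
  exact h.isInterior hne.1 hne.2 ⟨a, ha, rfl⟩

variable (T)

theorem not_adj_leaf_leaf (hcard : 3 ≤ X.ncard) {a b : α} (ha : a ∈ X) (hb : b ∈ X) :
    ¬ T.tree.Adj (T.ι a) (T.ι b) := by
  intro hab
  have hpair : ({a, b} : Set α).ncard < X.ncard :=
    (Set.ncard_insert_le a {b}).trans_lt (by rw [Set.ncard_singleton]; omega)
  obtain ⟨c, hc, hcab⟩ := Set.exists_mem_notMem_of_ncard_lt_ncard hpair
  have hca : T.ι a ≠ T.ι c := fun h => hcab (Or.inl (T.ι_injOn hc ha h.symm))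
  obtain ⟨n, hn, q, hq⟩ := exists_eq_cons_of_ne hca (T.treePath (T.ι a) (T.ι c))
  obtain rfl := T.eq_of_adj_leaf ha hn hab
  rcases leaf_eq_or_eq_of_btw hb (btw_of_treePath_eq_cons hq) with h | h
  · exact hab.ne h.symm
  · exact hcab (Or.inr (T.ι_injOn hc hb h.symm))

section VertexCount

open Finset

theorem three_le_ncard_neighborSet (hX : X.Nonempty) {v : T.V} (hv : T.IsInterior v) :
    3 ≤ (T.tree.neighborSet v).ncard := by
  obtain ⟨a, ha⟩ := hX
  have h0 := ((T.isTree.connected.preconnected v (T.ι a)).nonempty_neighborSet_left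
    fun h => hv ⟨a, ha, h.symm⟩).ncard_pos (Set.toFinite _)
  have h1 : (T.tree.neighborSet v).ncard ≠ 1 := fun h => hv ((T.leaf_iff v).mp h)
  have h2 := T.no_deg_two v
  omega

open Classical in
theorem card_filter_not_isInterior : #(univ.filter (¬ T.IsInterior ·)) = X.ncard := by
  simp_rw [not_isInterior]
  rw [← Fintype.card_subtype, ← Nat.card_eq_fintype_card, Nat.card_coe_set_eq,
    T.ι_injOn.ncard_image]

open Classical in
theorem ncard_add_sum_ncard_neighborSet :
    X.ncard + ∑ v ∈ univ.filter T.IsInterior, (T.tree.neighborSet v).ncard + 2 =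
      2 * Nat.card T.V := by
  have hdeg : ∀ v, (T.tree.neighborSet v).ncard = T.tree.degree v := fun v => by
    rw [← card_neighborSet_eq_degree, Set.ncard_eq_toFinset_card', Set.toFinset_card]
  have hleaf : ∑ v ∈ univ.filter (¬ T.IsInterior ·), (T.tree.neighborSet v).ncard = X.ncard := by
    rw [sum_congr rfl fun v hv => (T.leaf_iff v).mpr (T.not_isInterior.mp (mem_filter.mp hv).2),
      sum_const, smul_eq_mul, mul_one, T.card_filter_not_isInterior]
  have hsplit : ∑ v ∈ univ.filter T.IsInterior, (T.tree.neighborSet v).ncard +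
      ∑ v ∈ univ.filter (¬ T.IsInterior ·), (T.tree.neighborSet v).ncard =
      ∑ v, T.tree.degree v := by
    rw [sum_filter_add_sum_filter_not]
    exact sum_congr rfl fun v _ => hdeg v
  have hsum := T.tree.sum_degrees_eq_twice_card_edges
  have hedges := T.isTree.card_edgeFinset
  rw [Nat.card_eq_fintype_card]
  omega

open Classical in
theorem card_filter_isInterior_add_ncard :
    #(univ.filter T.IsInterior) + X.ncard = Nat.card T.V := by
  rw [← T.card_filter_not_isInterior, card_filter_add_card_filter_not, card_univ,
    Nat.card_eq_fintype_card]

theorem card_add_two_le (hcard : 3 ≤ X.ncard) : Nat.card T.V + 2 ≤ 2 * X.ncard := by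
  classical
  have hX : X.Nonempty := Set.nonempty_of_ncard_ne_zero (by omega)
  have hsum := T.ncard_add_sum_ncard_neighborSet
  have hcount := T.card_filter_isInterior_add_ncard
  have hdeg := card_nsmul_le_sum (univ.filter T.IsInterior)
    (fun v => (T.tree.neighborSet v).ncard) 3
    fun v hv => T.three_le_ncard_neighborSet hX (mem_filter.mp hv).2
  rw [smul_eq_mul] at hdeg
  omega

theorem card_add_two_eq (hT : T.IsFullyResolved) : Nat.card T.V + 2 = 2 * X.ncard := by
  classical
  have hsum := T.ncard_add_sum_ncard_neighborSet
  have hcount := T.card_filter_isInterior_add_ncard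
  rw [sum_congr rfl fun v hv => hT v (mem_filter.mp hv).2, sum_const, smul_eq_mul] at hsum
  omega

end VertexCount

theorem mem_support_of_adj_of_adj {v u₁ u₂ : T.V} (h₁ : T.tree.Adj v u₁) (h₂ : T.tree.Adj v u₂)
    (hne : u₁ ≠ u₂) (W : T.tree.Walk u₁ u₂) : v ∈ W.support := by
  have hp : (cons h₁.symm (cons h₂ nil)).IsPath := by simp [h₁.ne', h₂.ne, hne]
  refine T.support_treePath_subset W ?_
  rw [← T.treePath_eq_of_isPath hp]
  simp

theorem compSet_eq_sideSet {v u : T.V} (h : T.tree.Adj v u) :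
    T.compSet v u = T.sideSet s(v, u) u := by
  ext a
  constructor
  · rintro ⟨haX, p, hp⟩
    refine ⟨haX, ⟨p.toDeleteEdges {s(v, u)} fun e he hmem => ?_⟩⟩
    rw [Set.mem_singleton_iff] at hmem
    subst hmem
    exact hp (p.fst_mem_support_of_mem_edges he)
  · rintro ⟨haX, ⟨p⟩⟩
    refine ⟨haX, p.transfer T.tree fun e he =>
      edgeSet_subset_edgeSet.mpr (deleteEdges_le _) (p.edges_subset_edgeSet he), ?_⟩
    classical
    rw [support_transfer]
    intro hv
    exact isBridge_iff.mp (isAcyclic_iff_forall_isBridge.mp T.isTree.isAcyclic h)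
      ⟨p.dropUntil v hv⟩

theorem compSet_mem_clus {v u : T.V} (h : T.tree.Adj v u) : T.compSet v u ∈ clus T :=
  ⟨s(v, u), h, u, Sym2.mem_mk_right v u, T.compSet_eq_sideSet h⟩

theorem disjoint_compSet {v u₁ u₂ : T.V} (h₁ : T.tree.Adj v u₁) (h₂ : T.tree.Adj v u₂)
    (hne : u₁ ≠ u₂) : Disjoint (T.compSet v u₁) (T.compSet v u₂) := by
  rw [Set.disjoint_left]
  rintro a ⟨-, W₁, hW₁⟩ ⟨-, W₂, hW₂⟩
  have := T.mem_support_of_adj_of_adj h₁ h₂ hne (W₁.reverse.append W₂)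
  rw [mem_support_append_iff, support_reverse, List.mem_reverse] at this
  exact this.elim hW₁ hW₂

theorem btw_of_mem_compSet {v u : T.V} (h : T.tree.Adj v u) {a : α} (ha : a ∈ T.compSet v u) :
    T.Btw (T.ι a) u v := by
  obtain ⟨-, W, hW⟩ := ha
  refine btw_of_forall_btw fun y hy₁ hy₂ => ?_
  rcases eq_or_eq_of_btw_of_adj h.symm hy₂ with rfl | rfl
  · rfl
  · exact absurd (T.support_treePath_subset W hy₁) hW

theorem btw_of_mem_compSet_of_mem_compSet {v u₁ u₂ : T.V} (h₁ : T.tree.Adj v u₁)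
    (h₂ : T.tree.Adj v u₂) (hne : u₁ ≠ u₂) {a b : α} (ha : a ∈ T.compSet v u₁)
    (hb : b ∈ T.compSet v u₂) : T.Btw (T.ι a) v (T.ι b) := by
  obtain ⟨-, W₁, hW₁⟩ := ha
  obtain ⟨-, W₂, hW₂⟩ := hb
  have := T.mem_support_of_adj_of_adj h₁ h₂ hne
    ((W₁.reverse.append (T.treePath (T.ι a) (T.ι b))).append W₂)
  simp only [mem_support_append_iff, support_reverse, List.mem_reverse] at this
  tauto

theorem compSet_subset_compSet {z u n : T.V} (h : T.tree.Adj z u) (hn : T.tree.Adj u n)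
    (hnz : n ≠ z) : T.compSet u n ⊆ T.compSet z u := by
  classical
  rintro b ⟨hbX, W, hW⟩
  have hzW : z ∉ W.support := fun hz => hW (support_dropUntil_subset_support W hz
    (T.mem_support_of_adj_of_adj h.symm hn hnz.symm (W.dropUntil z hz)))
  refine ⟨hbX, W.concat hn.symm, ?_⟩
  rw [support_concat, List.mem_append, List.mem_singleton]
  rintro (hz | rfl)
  exacts [hzW hz, h.ne rfl]

theorem exists_adj_mem_compSet {z u : T.V} {a : α} (ha : a ∈ T.compSet z u) (hau : T.ι a ≠ u) :
    ∃ n, T.tree.Adj u n ∧ n ≠ z ∧ a ∈ T.compSet u n := by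
  obtain ⟨haX, W, hW⟩ := ha
  have hz : ¬ T.Btw u z (T.ι a) := fun hz =>
    hW (by simpa using T.support_treePath_subset W.reverse hz)
  obtain ⟨n, hn, q, hq⟩ := exists_eq_cons_of_ne hau.symm (T.treePath u (T.ι a))
  have hp := T.treePath_isPath u (T.ι a)
  rw [hq, cons_isPath_iff] at hp
  refine ⟨n, hn, fun hnz => hz (hnz ▸ btw_of_treePath_eq_cons hq), haX, q.reverse, ?_⟩
  simpa using hp.2

theorem compSet_of_leaf {a : α} (ha : a ∈ X) {y : T.V} (hy : T.tree.Adj (T.ι a) y) :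
    T.compSet y (T.ι a) = {a} := by
  ext b
  constructor
  · intro hb
    by_contra hba
    obtain ⟨n, hn, hny, -⟩ := T.exists_adj_mem_compSet hb fun h => hba (T.ι_injOn hb.1 ha h)
    exact hny (T.eq_of_adj_leaf ha hn hy)
  · rintro rfl
    exact ⟨ha, nil, by simp [hy.ne']⟩

variable {f : Set α → α}

theorem rep_mem_compSet (hfT : IsStableTransversal (clus T) f) {v u : T.V}
    (h : T.tree.Adj v u) : f (T.compSet v u) ∈ T.compSet v u :=
  hfT.1 _ (T.compSet_mem_clus h)

theorem rep_ne_rep (hfT : IsStableTransversal (clus T) f) {v u u' : T.V} (h : T.tree.Adj v u)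
    (h' : T.tree.Adj v u') (hne : u ≠ u') : f (T.compSet v u) ≠ f (T.compSet v u') := fun heq =>
  Set.disjoint_left.mp (T.disjoint_compSet h h' hne) (T.rep_mem_compSet hfT h)
    (heq ▸ T.rep_mem_compSet hfT h')

theorem rep_compSet_leaf (hfT : IsStableTransversal (clus T) f) {a : α} (ha : a ∈ X) {y : T.V}
    (hy : T.tree.Adj (T.ι a) y) : f (T.compSet y (T.ι a)) = a := by
  simpa [T.compSet_of_leaf ha hy] using T.rep_mem_compSet hfT hy.symm

theorem exists_rep_eq_rep (hfT : IsStableTransversal (clus T) f) {z u : T.V}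
    (h : T.tree.Adj z u) (hu : T.IsInterior u) :
    ∃ n, T.tree.Adj u n ∧ n ≠ z ∧ f (T.compSet z u) = f (T.compSet u n) := by
  have hx := T.rep_mem_compSet hfT h
  obtain ⟨n, hn, hnz, hxn⟩ := T.exists_adj_mem_compSet hx fun hxu => hu ⟨_, hx.1, hxu⟩
  exact ⟨n, hn, hnz, hfT.2 _ (T.compSet_mem_clus h) _ (T.compSet_mem_clus hn) hxn
    (T.compSet_subset_compSet h hn hnz)⟩

theorem exists_two_other_adj (hT : T.IsFullyResolved) {v u : T.V} (hv : T.IsInterior v)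
    (hu : T.tree.Adj v u) :
    ∃ u₂ u₃, T.tree.Adj v u₂ ∧ T.tree.Adj v u₃ ∧ u ≠ u₂ ∧ u ≠ u₃ ∧ u₂ ≠ u₃ := by
  obtain ⟨u₁, u₂, u₃, h12, h13, h23, hset⟩ := Set.ncard_eq_three.mp (hT v hv)
  have hadj : ∀ x, T.tree.Adj v x ↔ x = u₁ ∨ x = u₂ ∨ x = u₃ := fun x => by
    rw [← mem_neighborSet, hset]
    simp
  rcases (hadj u).mp hu with rfl | rfl | rfl
  · exact ⟨u₂, u₃, by simp [hadj], by simp [hadj], h12, h13, h23⟩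
  · exact ⟨u₁, u₃, by simp [hadj], by simp [hadj], h12.symm, h23, h13⟩
  · exact ⟨u₁, u₂, by simp [hadj], by simp [hadj], h13.symm, h23.symm, h12⟩

theorem pathDist_eq_gromovProduct (w : Sym2 T.V → ℝ) {a b c v : T.V} (hab : T.Btw a v b)
    (hac : T.Btw a v c) (hbc : T.Btw b v c) :
    T.pathDist w a v = (T.pathDist w a b + T.pathDist w a c - T.pathDist w b c) / 2 := by
  rw [pathDist_eq_add_of_btw w hab, pathDist_eq_add_of_btw w hac, pathDist_eq_add_of_btw w hbc,
    T.pathDist_symm w v b]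
  ring

def IsBranchMedian (T T' : XTree α X) (f : Set α → α) (v : T.V) (v' : T'.V) : Prop :=
  ∀ u u', T.tree.Adj v u → T.tree.Adj v u' → u ≠ u' →
    T'.Btw (T'.ι (f (T.compSet v u))) v' (T'.ι (f (T.compSet v u')))

theorem isBranchMedian_self (hfT : IsStableTransversal (clus T) f) (v : T.V) :
    IsBranchMedian T T f v v := fun _ _ h h' hne =>
  T.btw_of_mem_compSet_of_mem_compSet h h' hne (T.rep_mem_compSet hfT h)
    (T.rep_mem_compSet hfT h')

theorem pathDist_rep_eq_of_isBranchMedian {T' : XTree α X} {w : Sym2 T.V → ℝ}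
    {w' : Sym2 T'.V → ℝ} (hT : T.IsFullyResolved) (hfT : IsStableTransversal (clus T) f)
    (hiso : LIsometric T w T' w' (tripletCoverOf T f)) {v : T.V} (hv : T.IsInterior v)
    {v' : T'.V} (hv' : IsBranchMedian T T' f v v') {u : T.V} (hu : T.tree.Adj v u) :
    T'.pathDist w' (T'.ι (f (T.compSet v u))) v' = T.pathDist w (T.ι (f (T.compSet v u))) v := by
  obtain ⟨u₂, u₃, h₂, h₃, h12, h13, h23⟩ := T.exists_two_other_adj hT hv hu
  have hcord : ∀ {x y}, T.tree.Adj v x → T.tree.Adj v y → x ≠ y →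
      T'.pathDist w' (T'.ι (f (T.compSet v x))) (T'.ι (f (T.compSet v y))) =
        T.pathDist w (T.ι (f (T.compSet v x))) (T.ι (f (T.compSet v y))) :=
    fun hx hy hxy => (hiso _ ⟨v, _, _, hv, hx, hy, hxy, rfl⟩).symm
  have hv₀ := T.isBranchMedian_self hfT v
  rw [T'.pathDist_eq_gromovProduct w' (hv' _ _ hu h₂ h12) (hv' _ _ hu h₃ h13) (hv' _ _ h₂ h₃ h23),
    T.pathDist_eq_gromovProduct w (hv₀ _ _ hu h₂ h12) (hv₀ _ _ hu h₃ h13) (hv₀ _ _ h₂ h₃ h23),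
    hcord hu h₂ h12, hcord hu h₃ h13, hcord h₂ h₃ h23]

theorem exists_isBranchMedian (hT : T.IsFullyResolved) {v : T.V} (hv : T.IsInterior v)
    (T' : XTree α X) : ∃ v', IsBranchMedian T T' f v v' := by
  obtain ⟨u₁, u₂, u₃, -, -, -, hset⟩ := Set.ncard_eq_three.mp (hT v hv)
  obtain ⟨m, h12, h13, h23⟩ := T'.exists_median (T'.ι (f (T.compSet v u₁)))
    (T'.ι (f (T.compSet v u₂))) (T'.ι (f (T.compSet v u₃)))
  refine ⟨m, fun u u' hu hu' hne => ?_⟩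
  have hu : u ∈ ({u₁, u₂, u₃} : Set T.V) := hset ▸ hu
  have hu' : u' ∈ ({u₁, u₂, u₃} : Set T.V) := hset ▸ hu'
  rcases hu with rfl | rfl | rfl <;> rcases hu' with rfl | rfl | rfl <;>
    first
    | exact absurd rfl hne
    | exact h12 | exact h13 | exact h23 | exact h12.symm | exact h13.symm | exact h23.symm

structure IsMedianMap (T T' : XTree α X) (f : Set α → α) (φ : T.V → T'.V) : Prop where
  map_leaf : ∀ a ∈ X, φ (T.ι a) = T'.ι a
  isBranchMedian : ∀ v, T.IsInterior v → IsBranchMedian T T' f v (φ v)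

theorem isMedianMap_id (hfT : IsStableTransversal (clus T) f) : IsMedianMap T T f id :=
  ⟨fun _ _ => rfl, fun v _ => T.isBranchMedian_self hfT v⟩

theorem exists_isMedianMap (hT : T.IsFullyResolved) (T' : XTree α X) :
    ∃ φ : T.V → T'.V, IsMedianMap T T' f φ := by
  have H : ∀ v, ∃ v', (∀ a ∈ X, T.ι a = v → v' = T'.ι a) ∧
      (T.IsInterior v → IsBranchMedian T T' f v v') := by
    intro v
    by_cases hv : T.IsInterior v
    · obtain ⟨v', hv'⟩ := T.exists_isBranchMedian hT hv T'
      exact ⟨v', fun a ha hav => absurd ⟨a, ha, hav⟩ hv, fun _ => hv'⟩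
    · obtain ⟨a, ha, rfl⟩ := T.not_isInterior.mp hv
      exact ⟨T'.ι a, fun b hb hba => by rw [T.ι_injOn hb ha hba], fun h => absurd h hv⟩
  choose φ hφ using H
  exact ⟨φ, fun a ha => (hφ _).1 a ha rfl, fun v hv => (hφ v).2 hv⟩

namespace IsMedianMap

variable {T} {T' : XTree α X} {φ : T.V → T'.V} {w : Sym2 T.V → ℝ} {w' : Sym2 T'.V → ℝ}

theorem isInterior (hφ : IsMedianMap T T' f φ) (hT : T.IsFullyResolved)
    (hfT : IsStableTransversal (clus T) f) {v : T.V} (hv : T.IsInterior v) :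
    T'.IsInterior (φ v) := by
  rintro ⟨b, hb, hφv⟩
  obtain ⟨u₁, u₂, u₃, h12, h13, h23, hset⟩ := Set.ncard_eq_three.mp (hT v hv)
  have hadj : ∀ x ∈ ({u₁, u₂, u₃} : Set T.V), T.tree.Adj v x := fun x hx => by
    rwa [← hset] at hx
  have hleaf : ∀ x ∈ ({u₁, u₂, u₃} : Set T.V), ∀ y ∈ ({u₁, u₂, u₃} : Set T.V), x ≠ y →
      b = f (T.compSet v x) ∨ b = f (T.compSet v y) := fun x hx y hy hxy =>
    (leaf_eq_or_eq_of_btw hb (hφv ▸ hφ.isBranchMedian v hv x y (hadj x hx) (hadj y hy) hxy)).imp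
      (T'.ι_injOn hb (T.rep_mem_compSet hfT (hadj x hx)).1)
      (T'.ι_injOn hb (T.rep_mem_compSet hfT (hadj y hy)).1)
  have hne : ∀ x ∈ ({u₁, u₂, u₃} : Set T.V), ∀ y ∈ ({u₁, u₂, u₃} : Set T.V), x ≠ y →
      f (T.compSet v x) ≠ f (T.compSet v y) := fun x hx y hy hxy =>
    T.rep_ne_rep hfT (hadj x hx) (hadj y hy) hxy
  grind [hleaf u₁ (by simp) u₂ (by simp) h12, hleaf u₁ (by simp) u₃ (by simp) h13,
    hleaf u₂ (by simp) u₃ (by simp) h23, hne u₁ (by simp) u₂ (by simp) h12,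
    hne u₁ (by simp) u₃ (by simp) h13, hne u₂ (by simp) u₃ (by simp) h23]

theorem btw_rep_and_pathDist_eq (hφ : IsMedianMap T T' f φ) (hT : T.IsFullyResolved)
    (hfT : IsStableTransversal (clus T) f) (hiso : LIsometric T w T' w' (tripletCoverOf T f))
    (hw : T.IsProperWeighting w) (hw' : T'.IsEdgeWeighting w') {u z : T.V}
    (h : T.tree.Adj u z) (hz : T.IsInterior z) :
    T'.Btw (T'.ι (f (T.compSet z u))) (φ u) (φ z) ∧
      T'.pathDist w' (φ u) (φ z) = T.pathDist w u z := by
  have hdz := T.pathDist_rep_eq_of_isBranchMedian hT hfT hiso hz (hφ.isBranchMedian z hz) h.symm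
  by_cases hu : T.IsInterior u
  · obtain ⟨n, hn, hnz, hxn⟩ := T.exists_rep_eq_rep hfT h.symm hu
    obtain ⟨n', hn', hn'u, hyn'⟩ := T.exists_rep_eq_rep hfT h hz
    have hBz := hφ.isBranchMedian z hz u n' h.symm hn' hn'u.symm
    have hBu := hφ.isBranchMedian u hu n z hn h hnz
    have hdu := T.pathDist_rep_eq_of_isBranchMedian hT hfT hiso hu (hφ.isBranchMedian u hu) hn
    rw [← hyn'] at hBz
    rw [← hxn] at hBu hdu
    have hdxz := pathDist_eq_add_of_btw w
      (T.btw_of_mem_compSet h.symm (T.rep_mem_compSet hfT h.symm))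
    have hpos : 0 < T.pathDist w u z := by
      rw [T.pathDist_of_adj w h]
      exact hw.pos_of_adj h hu hz
    -- Both heights are measured from the same leaf, and `φ z` is the farther one, so it
    -- cannot lie between that leaf and `φ u`.
    rcases hBu.btw_or_btw hBz with hB | hB
    · exact ⟨hB, by linarith [pathDist_eq_add_of_btw w' hB]⟩
    · linarith [pathDist_eq_add_of_btw w' hB, T'.pathDist_nonneg hw' (φ z) (φ u)]
  · obtain ⟨a, ha, rfl⟩ := T.not_isInterior.mp hu
    rw [T.rep_compSet_leaf hfT ha h] at hdz ⊢
    rw [hφ.map_leaf a ha]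
    exact ⟨btw_left _ _, hdz⟩

theorem pathDist_eq_of_adj (hφ : IsMedianMap T T' f φ) (hcard : 3 ≤ X.ncard)
    (hT : T.IsFullyResolved) (hfT : IsStableTransversal (clus T) f)
    (hiso : LIsometric T w T' w' (tripletCoverOf T f)) (hw : T.IsProperWeighting w)
    (hw' : T'.IsEdgeWeighting w') {u z : T.V} (h : T.tree.Adj u z) :
    T'.pathDist w' (φ u) (φ z) = T.pathDist w u z := by
  by_cases hz : T.IsInterior z
  · exact (hφ.btw_rep_and_pathDist_eq hT hfT hiso hw hw' h hz).2
  by_cases hu : T.IsInterior u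
  · rw [T'.pathDist_symm, T.pathDist_symm]
    exact (hφ.btw_rep_and_pathDist_eq hT hfT hiso hw hw' h.symm hu).2
  obtain ⟨a, ha, rfl⟩ := T.not_isInterior.mp hu
  obtain ⟨b, hb, rfl⟩ := T.not_isInterior.mp hz
  exact absurd h (T.not_adj_leaf_leaf hcard ha hb)

theorem ne_of_adj (hφ : IsMedianMap T T' f φ) (hcard : 3 ≤ X.ncard) (hT : T.IsFullyResolved)
    (hfT : IsStableTransversal (clus T) f) (hiso : LIsometric T w T' w' (tripletCoverOf T f))
    (hw : T.IsProperWeighting w) (hw' : T'.IsEdgeWeighting w') {u z : T.V}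
    (h : T.tree.Adj u z) : φ u ≠ φ z := by
  by_cases hu : T.IsInterior u <;> by_cases hz : T.IsInterior z
  · intro heq
    have hd := hφ.pathDist_eq_of_adj hcard hT hfT hiso hw hw' h
    rw [heq, pathDist_self, T.pathDist_of_adj w h] at hd
    exact (hw.pos_of_adj h hu hz).ne hd
  · obtain ⟨b, hb, rfl⟩ := T.not_isInterior.mp hz
    rw [hφ.map_leaf b hb]
    exact fun heq => hφ.isInterior hT hfT hu ⟨b, hb, heq.symm⟩
  · obtain ⟨a, ha, rfl⟩ := T.not_isInterior.mp hu
    rw [hφ.map_leaf a ha]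
    exact fun heq => hφ.isInterior hT hfT hz ⟨a, ha, heq⟩
  · obtain ⟨a, ha, rfl⟩ := T.not_isInterior.mp hu
    obtain ⟨b, hb, rfl⟩ := T.not_isInterior.mp hz
    exact absurd h (T.not_adj_leaf_leaf hcard ha hb)

theorem btw_of_adj_of_adj (hφ : IsMedianMap T T' f φ) (hT : T.IsFullyResolved)
    (hfT : IsStableTransversal (clus T) f) (hiso : LIsometric T w T' w' (tripletCoverOf T f))
    (hw : T.IsProperWeighting w) (hw' : T'.IsEdgeWeighting w') {u z z' : T.V}
    (h : T.tree.Adj u z) (h' : T.tree.Adj z z') (hne : u ≠ z') : T'.Btw (φ u) (φ z) (φ z') := by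
  have hz := T.isInterior_of_adj_of_adj h.symm h' hne
  exact btw_of_btw_of_btw (hφ.isBranchMedian z hz u z' h.symm h' hne)
    (hφ.btw_rep_and_pathDist_eq hT hfT hiso hw hw' h hz).1
    (hφ.btw_rep_and_pathDist_eq hT hfT hiso hw hw' h'.symm hz).1

theorem btw_of_adj_of_btw (hφ : IsMedianMap T T' f φ) (hcard : 3 ≤ X.ncard)
    (hT : T.IsFullyResolved) (hfT : IsStableTransversal (clus T) f)
    (hiso : LIsometric T w T' w' (tripletCoverOf T f)) (hw : T.IsProperWeighting w)
    (hw' : T'.IsEdgeWeighting w') {u z v : T.V} (h : T.tree.Adj u z) (hb : T.Btw u z v) :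
    T'.Btw (φ u) (φ z) (φ v) := by
  have key : ∀ {z v} (q : T.tree.Walk z v) {u} (h : T.tree.Adj u z), (cons h q).IsPath →
      T'.Btw (φ u) (φ z) (φ v) := by
    intro z v q
    induction q with
    | nil => exact fun _ _ => btw_right _ _
    | @cons z z' v h' q ih =>
      intro u h hp
      have hu : u ≠ z' := by
        rintro rfl
        simp at hp
      have hB₀ := hφ.btw_of_adj_of_adj hT hfT hiso hw hw' h h' hu
      have hB₁ := (hB₀.trans (ih h' hp.of_cons) (hφ.ne_of_adj hcard hT hfT hiso hw hw' h'))
      exact hB₁.btw_of_btw_left hB₀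
  refine key (T.treePath z v) h ?_
  have hsplit := hb.append_treePath
  rw [T.treePath_of_adj h, cons_append, nil_append] at hsplit
  exact hsplit ▸ T.treePath_isPath u v

theorem injective (hφ : IsMedianMap T T' f φ) (hcard : 3 ≤ X.ncard) (hT : T.IsFullyResolved)
    (hfT : IsStableTransversal (clus T) f) (hiso : LIsometric T w T' w' (tripletCoverOf T f))
    (hw : T.IsProperWeighting w) (hw' : T'.IsEdgeWeighting w') : Function.Injective φ := by
  intro a c hac
  by_contra hne
  obtain ⟨n, h, q, hq⟩ := exists_eq_cons_of_ne hne (T.treePath a c)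
  have hb := hφ.btw_of_adj_of_btw hcard hT hfT hiso hw hw' h (btw_of_treePath_eq_cons hq)
  rw [← hac] at hb
  exact hφ.ne_of_adj hcard hT hfT hiso hw hw' h (eq_of_btw_self hb).symm

theorem adj (hφ : IsMedianMap T T' f φ) (hcard : 3 ≤ X.ncard) (hT : T.IsFullyResolved)
    (hfT : IsStableTransversal (clus T) f) (hiso : LIsometric T w T' w' (tripletCoverOf T f))
    (hw : T.IsProperWeighting w) (hw' : T'.IsEdgeWeighting w') (hsurj : Function.Surjective φ)
    {u v : T.V} (h : T.tree.Adj u v) : T'.tree.Adj (φ u) (φ v) := by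
  refine adj_of_forall_btw (hφ.ne_of_adj hcard hT hfT hiso hw hw' h) fun y hy => ?_
  obtain ⟨z, rfl⟩ := hsurj y
  obtain ⟨m, hm, hmu, hmv⟩ := T.exists_median u v z
  rcases eq_or_eq_of_btw_of_adj h hm with rfl | rfl
  · exact Or.inl (btw_antisymm
      (hφ.btw_of_adj_of_btw hcard hT hfT hiso hw hw' h.symm hmv) hy.symm).symm
  · exact Or.inr (btw_antisymm (hφ.btw_of_adj_of_btw hcard hT hfT hiso hw hw' h hmu) hy).symm

end IsMedianMap

theorem isEdgeWeightLasso_tripletCoverOf (hcard : 3 ≤ X.ncard) (hT : T.IsFullyResolved)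
    (hfT : IsStableTransversal (clus T) f) : IsEdgeWeightLasso T (tripletCoverOf T f) := by
  intro w w' hw hw' hiso e he
  induction e using Sym2.ind with
  | h u z =>
    have hd : T.pathDist w' u z = T.pathDist w u z :=
      (T.isMedianMap_id hfT).pathDist_eq_of_adj hcard hT hfT hiso hw hw'.1 he
    rw [T.pathDist_of_adj w he, T.pathDist_of_adj w' he] at hd
    exact hd.symm

theorem isTopologicalLasso_tripletCoverOf (hcard : 3 ≤ X.ncard) (hT : T.IsFullyResolved)
    (hfT : IsStableTransversal (clus T) f) : IsTopologicalLasso T (tripletCoverOf T f) := by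
  intro T' w w' hw hw' hiso
  obtain ⟨φ, hφ⟩ := T.exists_isMedianMap hT T'
  have hbij : φ.Bijective := (hφ.injective hcard hT hfT hiso hw hw'.1).bijective_of_nat_card_le
    (by linarith [T.card_add_two_eq hT, T'.card_add_two_le hcard])
  obtain ⟨e, he⟩ := T.isTree.exists_iso_of_bijective T'.isTree.isAcyclic hbij
    (hφ.adj hcard hT hfT hiso hw hw'.1 hbij.2)
  exact ⟨e, fun a ha => he ▸ hφ.map_leaf a ha⟩

end XTree

open XTree in
theorem stableTripletCover_isStrongLasso_general {α : Type} (X : Set α)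
    (hcard : 3 ≤ X.ncard) (T : XTree α X) (hT : T.IsFullyResolved)
    (L : Set (Sym2 α)) (hL : IsStableTripletCover T L) :
    IsStrongLasso T L := by
  obtain ⟨f, hfT, rfl⟩ := hL
  exact ⟨T.isEdgeWeightLasso_tripletCoverOf hcard hT hfT,
    T.isTopologicalLasso_tripletCoverOf hcard hT hfT⟩

open XTree in
/-- If `L` is a stable triplet cover of a fully-resolved `X`-tree `T`
with `n := |X| ≥ 3`, then `L` is a strong lasso for `T`, i.e. simultaneously an
edge-weight lasso and a topological lasso for `T`. -/
theorem stableTripletCover_isStrongLasso {α : Type} (X : Set α) (hfin : X.Finite)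
    (hcard : 3 ≤ X.ncard) (T : XTree α X) (hT : T.IsFullyResolved)
    (L : Set (Sym2 α)) (hL : IsStableTripletCover T L) :
    IsStrongLasso T L :=
  stableTripletCover_isStrongLasso_general X hcard T hT L hL
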